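/- Let G be a finite group, P and Q p-subgroups of G that are not G-conjugate, with Q normal in G and Q not contained in any conjugate of P intersected appropriately. If P ∩ Q is a proper subgroup of Q, then the Brauer-type quotient R[G/P]^{[Q]} := R[G/P]^Q / (∑_{Q'<Q} Tr_{Q'}^Q (R[G/P]^{Q'}) + π R[G/P]^Q) is zero. -/

import Mathlib

/-!
A `Q`-fixed vector `x` of `k[X]` is constant on `Q`-orbits, so subtracting `x a` times the orbit
sum of `a` removes the orbit of `a` from the support; by induction `x` is a combination of orbit
sums of finite orbits. The orbit sum of `a` is the relative transfer of `δ_a` from its stabilizer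
`Q_a = Stab(a) ⊓ Q`. For `X = G/P` with `Q` normal, `Q` fixes `gP` only if `Q ≤ gPg⁻¹`, i.e.
`Q ≤ P`; so when `P ⊓ Q < Q` every `Q_a` is a proper subgroup of `Q`.
-/

/-- The permutation representation `G →* End(H →₀ k)` as `Representation.ofMulAction` was
defined in the older Mathlib (on `H →₀ k`, via `Finsupp.lmapDomain`). -/
noncomputable def finsuppOfMulAction (k : Type*) [Semiring k] (G : Type*) [Monoid G]
    (H : Type*) [MulAction G H] : Representation k G (H →₀ k) where
  toFun g := Finsupp.lmapDomain k k (g • ·)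
  map_one' := by ext; simp
  map_mul' x y := by ext; simp [mul_smul, Finsupp.mapDomain_comp]

open MulAction

section Semiring

variable {k G X : Type*} [Semiring k] [Group G] [MulAction G X]

theorem finsuppOfMulAction_apply (g : G) (f : X →₀ k) (b : X) :
    finsuppOfMulAction k G X g f b = f (g⁻¹ • b) := by
  rw [← Finsupp.mapDomain_apply (MulAction.injective g) f, smul_inv_smul]
  rfl

theorem finsuppOfMulAction_single (g : G) (a : X) (r : k) :
    finsuppOfMulAction k G X g (Finsupp.single a r) = Finsupp.single (g • a) r :=
  Finsupp.mapDomain_single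

theorem finsuppOfMulAction_eq_self_iff {g : G} {f : X →₀ k} :
    finsuppOfMulAction k G X g f = f ↔ ∀ b, f (g • b) = f b := by
  refine ⟨fun h b => ?_, fun h => Finsupp.ext fun b => ?_⟩
  · rw [← DFunLike.congr_fun h (g • b), finsuppOfMulAction_apply, inv_smul_smul]
  · rw [finsuppOfMulAction_apply, ← h, smul_inv_smul]

noncomputable def relTransfer (Q S : Subgroup G) (y : X →₀ k) : X →₀ k :=
  ∑ᶠ c : Q ⧸ S.subgroupOf Q, finsuppOfMulAction k G X ((Quotient.out c : Q) : G) y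

variable (k X) in
def properTransfers (Q : Subgroup G) : Set (X →₀ k) :=
  {z | ∃ S : Subgroup G, S < Q ∧ ∃ y : X →₀ k,
    (∀ q ∈ S, finsuppOfMulAction k G X q y = y) ∧ z = relTransfer Q S y}

theorem subgroupOf_stabilizer_inf (Q : Subgroup G) (a : X) :
    (stabilizer G a ⊓ Q).subgroupOf Q = stabilizer Q a := by
  ext q
  simp [Subgroup.mem_subgroupOf, Subgroup.smul_def]

theorem relTransfer_single {Q S : Subgroup G} {a : X}
    (hS : S.subgroupOf Q = stabilizer Q a) (hfin : (orbit Q a).Finite) (r : k) :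
    ⇑(relTransfer Q S (Finsupp.single a r)) = (orbit Q a).indicator (fun _ => r) := by
  have : relTransfer Q S (Finsupp.single a r) = ∑ c ∈ hfin.toFinset, Finsupp.single c r := by
    rw [relTransfer, hS, ← finsum_comp_equiv (orbitEquivQuotientStabilizer Q a)]
    have hout (o : orbit Q a) :
        ((Quotient.out (orbitEquivQuotientStabilizer Q a o) : Q) : G) • a = o := by
      rw [← Subgroup.smul_def, ← orbitEquivQuotientStabilizer_symm_apply,
        QuotientGroup.out_eq', Equiv.symm_apply_apply]
    simp_rw [finsuppOfMulAction_single, hout]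
    exact (finsum_set_coe_eq_finsum_mem (f := (Finsupp.single · r)) _).trans
      (finsum_mem_eq_finite_toFinset_sum _ hfin)
  classical
  ext b
  rw [this, Finsupp.finsetSum_apply]
  simp only [Finsupp.single_apply, Finset.sum_ite_eq', Set.Finite.mem_toFinset, Set.indicator]

theorem smul_mem_orbit_iff {Q : Subgroup G} {a b : X} {g : G} (hg : g ∈ Q) :
    g • b ∈ orbit Q a ↔ b ∈ orbit Q a := by
  change (⟨g, hg⟩ : Q) • b ∈ _ ↔ _
  rw [← orbit_eq_iff, orbit_smul, orbit_eq_iff]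

theorem apply_smul_of_fixed {Q : Subgroup G} {x : X →₀ k}
    (hx : ∀ q ∈ Q, finsuppOfMulAction k G X q x = x) {g : G}
    (hg : g ∈ Q) (b : X) : x (g • b) = x b :=
  finsuppOfMulAction_eq_self_iff.mp (hx g hg) b

theorem apply_eq_of_mem_orbit {Q : Subgroup G} {x : X →₀ k} {a : X}
    (hx : ∀ q ∈ Q, finsuppOfMulAction k G X q x = x) {b : X}
    (hb : b ∈ orbit Q a) : x b = x a := by
  obtain ⟨q, rfl⟩ := hb
  exact apply_smul_of_fixed hx q.2 a

theorem orbit_subset_support {Q : Subgroup G} {x : X →₀ k} {a : X}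
    (hx : ∀ q ∈ Q, finsuppOfMulAction k G X q x = x)
    (ha : a ∈ x.support) : orbit Q a ⊆ x.support := fun b hb => by
  rw [Finset.mem_coe, Finsupp.mem_support_iff, apply_eq_of_mem_orbit hx hb]
  exact Finsupp.mem_support_iff.mp ha

end Semiring

section Ring

variable {k G X : Type*} [Ring k] [Group G] [MulAction G X] {Q : Subgroup G}
  {x : X →₀ k} {a : X}

theorem sub_relTransfer_single_apply (hx : ∀ q ∈ Q, finsuppOfMulAction k G X q x = x)
    (ha : a ∈ x.support) (b : X) :
    (x - relTransfer Q (stabilizer G a ⊓ Q) (Finsupp.single a (x a))) b =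
      (orbit Q a)ᶜ.indicator x b := by
  have hfin := x.support.finite_toSet.subset (orbit_subset_support hx ha)
  rw [Finsupp.sub_apply, relTransfer_single (subgroupOf_stabilizer_inf Q a) hfin]
  by_cases hb : b ∈ orbit Q a
  · simp [hb, apply_eq_of_mem_orbit hx hb]
  · simp [hb]

theorem fixed_sub_relTransfer_single (hx : ∀ q ∈ Q, finsuppOfMulAction k G X q x = x)
    (ha : a ∈ x.support) :
    ∀ q ∈ Q, finsuppOfMulAction k G X q
        (x - relTransfer Q (stabilizer G a ⊓ Q) (Finsupp.single a (x a))) =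
      x - relTransfer Q (stabilizer G a ⊓ Q) (Finsupp.single a (x a)) := by
  intro g hg
  refine finsuppOfMulAction_eq_self_iff.mpr fun b => ?_
  rw [sub_relTransfer_single_apply hx ha, sub_relTransfer_single_apply hx ha]
  classical
  simp only [Set.indicator_apply, Set.mem_compl_iff, smul_mem_orbit_iff hg,
    apply_smul_of_fixed hx hg]

theorem card_support_sub_relTransfer_single_lt
    (hx : ∀ q ∈ Q, finsuppOfMulAction k G X q x = x) (ha : a ∈ x.support) :
    (x - relTransfer Q (stabilizer G a ⊓ Q) (Finsupp.single a (x a))).support.card <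
      x.support.card := by
  refine Finset.card_lt_card ⟨fun b hb => ?_, fun h => ?_⟩
  · rw [Finsupp.mem_support_iff, sub_relTransfer_single_apply hx ha] at hb
    exact Finsupp.mem_support_iff.mpr fun h0 => hb (by simp [h0])
  · have hya := Finsupp.mem_support_iff.mp (h ha)
    rw [sub_relTransfer_single_apply hx ha] at hya
    exact hya (Set.indicator_of_notMem (not_not_intro (mem_orbit_self a)) _)

theorem mem_span_properTransfers (hQ : ∀ a : X, ¬ Q ≤ stabilizer G a)
    (hx : ∀ q ∈ Q, finsuppOfMulAction k G X q x = x) :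
    x ∈ Submodule.span k (properTransfers k X Q) := by
  induction hn : x.support.card using Nat.strong_induction_on generalizing x with
  | _ n ih =>
    obtain hempty | ⟨a, ha⟩ := x.support.eq_empty_or_nonempty
    · rw [Finsupp.support_eq_empty.mp hempty]
      exact Submodule.zero_mem _
    have hT : relTransfer Q (stabilizer G a ⊓ Q) (Finsupp.single a (x a)) ∈
        properTransfers k X Q :=
      ⟨_, inf_lt_right.mpr (hQ a), _,
        fun q hq => by rw [finsuppOfMulAction_single, hq.1], rfl⟩
    rw [← sub_add_cancel x (relTransfer Q (stabilizer G a ⊓ Q) (Finsupp.single a (x a)))]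
    exact Submodule.add_mem _
      (ih _ (hn ▸ card_support_sub_relTransfer_single_lt hx ha)
        (fixed_sub_relTransfer_single hx ha) rfl)
      (Submodule.subset_span hT)

end Ring

theorem not_le_stabilizer_quotient {G : Type*} [Group G] {P Q : Subgroup G} [Q.Normal]
    (hQP : ¬ Q ≤ P) (a : G ⧸ P) : ¬ Q ≤ stabilizer G a := by
  obtain ⟨g, rfl⟩ := QuotientGroup.mk_surjective a
  refine fun h => hQP fun q hq => ?_
  -- `g q g⁻¹ ∈ Q` fixes `gP`, which says exactly that `q ∈ P`
  simpa [QuotientGroup.eq, mul_assoc] using h (Subgroup.Normal.conj_mem ‹_› q hq g)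

theorem stmt_12_general
    (R : Type) [CommRing R]
    (π : R)
    (G : Type) [Group G]
    (P Q : Subgroup G) [Q.Normal]
    (hPQ : P ⊓ Q < Q) :
    ∀ x : (G ⧸ P) →₀ R, (∀ q ∈ Q, finsuppOfMulAction R G (G ⧸ P) q x = x) →
      x ∈ Submodule.span R
        ({z : (G ⧸ P) →₀ R | ∃ Q' : Subgroup G, Q' < Q ∧
            ∃ y : (G ⧸ P) →₀ R, (∀ q ∈ Q', finsuppOfMulAction R G (G ⧸ P) q y = y) ∧
              z = ∑ᶠ c : Q ⧸ Q'.subgroupOf Q,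
                finsuppOfMulAction R G (G ⧸ P) ((Quotient.out c : Q) : G) y} ∪
         {z : (G ⧸ P) →₀ R | ∃ y : (G ⧸ P) →₀ R,
            (∀ q ∈ Q, finsuppOfMulAction R G (G ⧸ P) q y = y) ∧ z = π • y}) := fun _ hx =>
  Submodule.span_mono Set.subset_union_left
    (mem_span_properTransfers (not_le_stabilizer_quotient (inf_lt_right.mp hPQ)) hx)

/-- Let `R` be a complete DVR with uniformizer `π` and residue field of
characteristic `p`, `G` a finite group, and `P, Q` `p`-subgroups of `G` that are not
`G`-conjugate, with `Q` normal in `G`.  If `P ∩ Q` is a proper subgroup of `Q`, then the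
Brauer-type quotient `R[G/P]^{[Q]} = R[G/P]^Q / (∑_{Q'<Q} Tr_{Q'}^Q R[G/P]^{Q'} + π R[G/P]^Q)`
is zero, i.e. every `Q`-fixed point of `R[G/P]` lies in the span of relative transfers from
proper subgroups of `Q` together with `π`-multiples of `Q`-fixed points. -/
theorem stmt_12 (p : ℕ) [Fact p.Prime]
    (R : Type) [CommRing R] [IsDomain R] [IsDiscreteValuationRing R]
    [IsAdicComplete (IsLocalRing.maximalIdeal R) R]
    [CharP (IsLocalRing.ResidueField R) p]
    (π : R) (hπ : Irreducible π)
    (G : Type) [Group G] [Finite G]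
    (P Q : Subgroup G) (hP : IsPGroup p P) (hQ : IsPGroup p Q) [Q.Normal]
    (hnotconj : ∀ g : G, Subgroup.map (MulAut.conj g).toMonoidHom P ≠ Q)
    (hPQ : P ⊓ Q < Q) :
    ∀ x : (G ⧸ P) →₀ R, (∀ q ∈ Q, finsuppOfMulAction R G (G ⧸ P) q x = x) →
      x ∈ Submodule.span R
        ({z : (G ⧸ P) →₀ R | ∃ Q' : Subgroup G, Q' < Q ∧
            ∃ y : (G ⧸ P) →₀ R, (∀ q ∈ Q', finsuppOfMulAction R G (G ⧸ P) q y = y) ∧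
              z = ∑ᶠ c : Q ⧸ Q'.subgroupOf Q,
                finsuppOfMulAction R G (G ⧸ P) ((Quotient.out c : Q) : G) y} ∪
         {z : (G ⧸ P) →₀ R | ∃ y : (G ⧸ P) →₀ R,
            (∀ q ∈ Q, finsuppOfMulAction R G (G ⧸ P) q y = y) ∧ z = π • y}) :=
  stmt_12_general R π G P Q hPQ
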